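/- The K×K determinant det[C(2j+i-3, K-1)]_{i,j=1}^K equals det[C(2j-2, K-i)]_{i,j=1}^K, which equals (-2)^(K(K-1)/2). -/

import Mathlib

/-!
Vandermonde's convolution `C(2j + i, K-1) = ∑ₜ C(i, t) C(2j, K-1-t)` factors the first matrix as
the unitriangular Pascal matrix `[C(i, t)]` times `[C(2j, K-1-t)]`, so the two determinants agree.
Reversing the rows of the latter gives `[C(2j, i)]`, at the cost of the sign of the reversal
permutation, `(-1)^(K(K-1)/2)`. Finally `i! C(x, i)` is a monic polynomial of degree `i` in `x`,
so `(∏ i!) · det [C(2j, i)]` is the Vandermonde determinant of the nodes `2j`, which is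
`2^(K(K-1)/2) ∏ i!`.
-/

open Equiv Matrix Finset Nat

theorem Fin.prod_pow_val {M : Type*} [CommMonoid M] (n : ℕ) (c : M) :
    ∏ i : Fin n, c ^ (i : ℕ) = c ^ (n * (n - 1) / 2) := by
  rw [Finset.prod_pow_eq_pow_sum, Fin.sum_univ_eq_sum_range (fun i => i), Finset.sum_range_id]

theorem Fin.sign_revPerm (n : ℕ) :
    Perm.sign (Fin.revPerm : Perm (Fin n)) = (-1) ^ (n * (n - 1) / 2) := by
  have inverted (j : Fin n) :
      ∏ i ∈ Iio j, (if Fin.revPerm i < Fin.revPerm j then (1 : ℤˣ) else -1) = (-1) ^ (j : ℕ) := by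
    rw [Finset.prod_congr rfl fun i hi => if_neg (by simpa using (Finset.mem_Iio.mp hi).le),
      Finset.prod_const, Fin.card_Iio]
  simp_rw [Perm.sign_eq_prod_prod_Iio, inverted, Fin.prod_pow_val]

theorem Matrix.det_vandermonde_const_mul {R : Type*} [CommRing R] {n : ℕ} (c : R)
    (v : Fin n → R) :
    (vandermonde fun i => c * v i).det = c ^ (n * (n - 1) / 2) * (vandermonde v).det := by
  rw [← Fin.prod_pow_val, ← det_mul_row]
  congr 1
  ext i j
  simp [mul_pow]

theorem Matrix.prod_factorial_mul_det_choose {n : ℕ} (v : Fin n → ℕ) :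
    (∏ i : Fin n, ((i : ℕ)! : ℤ)) * (of fun i j : Fin n => ((v j).choose i : ℤ)).det =
      (vandermonde fun j => (v j : ℤ)).det := by
  rw [← det_mul_column, det_eval_matrixOfPolynomials_eq_det_vandermonde _
    (fun i => descPochhammer ℤ i) (fun i => descPochhammer_natDegree ℤ i)
    (fun i => monic_descPochhammer ℤ i), ← det_transpose]
  congr 1
  ext i j
  simp [descPochhammer_eval_eq_descFactorial, Nat.descFactorial_eq_factorial_mul_choose]

theorem Matrix.det_choose_mul_eq_pow (K c : ℕ) :
    (of fun i j : Fin K => ((c * j).choose i : ℤ)).det = (c : ℤ) ^ (K * (K - 1) / 2) := by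
  obtain _ | n := K
  · simp
  have hsf : (∏ i : Fin (n + 1), ((i : ℕ)! : ℤ)) = n.superFactorial := by
    rw [Fin.prod_univ_eq_prod_range (fun i => (i ! : ℤ)), ← Nat.cast_prod,
      Nat.prod_range_succ_factorial]
  have hne : (∏ i : Fin (n + 1), ((i : ℕ)! : ℤ)) ≠ 0 :=
    prod_ne_zero_iff.mpr fun i _ => by positivity
  have hvand := prod_factorial_mul_det_choose fun j : Fin (n + 1) => c * j
  push_cast at hvand
  rw [det_vandermonde_const_mul, det_vandermonde_id_eq_superFactorial, ← hsf] at hvand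
  exact mul_left_cancel₀ hne (hvand.trans (mul_comm _ _))

theorem Matrix.det_choose_mul_rev_eq_pow (K c : ℕ) :
    (of fun i j : Fin K => ((c * j).choose (K - 1 - i) : ℤ)).det =
      (-(c : ℤ)) ^ (K * (K - 1) / 2) := by
  have hrev : (of fun i j : Fin K => ((c * j).choose (K - 1 - i) : ℤ)) =
      (of fun i j : Fin K => ((c * j).choose i : ℤ)).submatrix Fin.revPerm id := by
    ext i j
    simp only [of_apply, submatrix_apply, Fin.revPerm_apply, Fin.val_rev, id]
    rw [Nat.sub_sub, Nat.add_comm 1]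
  rw [hrev, det_permute, det_choose_mul_eq_pow, Fin.sign_revPerm]
  simp [neg_pow (c : ℤ)]

theorem Matrix.choose_add_eq_pascal_mul {K : ℕ} (a : Fin K → ℕ) :
    (of fun i j : Fin K => ((a j + i).choose (K - 1) : ℤ)) =
      (of fun i t : Fin K => ((i : ℕ).choose t : ℤ)) *
        of fun t j : Fin K => ((a j).choose (K - 1 - t) : ℤ) := by
  ext i j
  have hK : K - 1 + 1 = K := Nat.sub_add_cancel i.pos
  rw [mul_apply, of_apply, add_comm, Nat.add_choose_eq,
    Finset.Nat.sum_antidiagonal_eq_sum_range_succ_mk, Nat.succ_eq_add_one, hK, Nat.cast_sum,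
    ← Fin.sum_univ_eq_sum_range]
  simp

theorem Matrix.det_pascal (K : ℕ) : (of fun i t : Fin K => ((i : ℕ).choose t : ℤ)).det = 1 := by
  rw [det_of_isLowerTriangular _ fun i t (h : i < t) => by simp [Nat.choose_eq_zero_of_lt h]]
  simp

theorem Matrix.det_choose_add_eq {K : ℕ} (a : Fin K → ℕ) :
    (of fun i j : Fin K => ((a j + i).choose (K - 1) : ℤ)).det =
      (of fun i j : Fin K => ((a j).choose (K - 1 - i) : ℤ)).det := by
  rw [choose_add_eq_pascal_mul, det_mul, det_pascal, one_mul]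

theorem symplectic_binom_det_general (K : ℕ) :
    (Matrix.of fun i j : Fin K =>
        ((2 * (j : ℕ) + (i : ℕ)).choose (K - 1) : ℤ)).det =
      (Matrix.of fun i j : Fin K =>
        ((2 * (j : ℕ)).choose (K - 1 - (i : ℕ)) : ℤ)).det ∧
    (Matrix.of fun i j : Fin K =>
        ((2 * (j : ℕ) + (i : ℕ)).choose (K - 1) : ℤ)).det =
      (-2) ^ (K * (K - 1) / 2) := by
  have h := det_choose_add_eq fun j : Fin K => 2 * (j : ℕ)
  refine ⟨h, h.trans ?_⟩
  simpa using det_choose_mul_rev_eq_pow K 2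

theorem symplectic_binom_det (K : ℕ) (hK : 0 < K) :
    (Matrix.of fun i j : Fin K =>
        ((2 * (j : ℕ) + (i : ℕ)).choose (K - 1) : ℤ)).det =
      (Matrix.of fun i j : Fin K =>
        ((2 * (j : ℕ)).choose (K - 1 - (i : ℕ)) : ℤ)).det ∧
    (Matrix.of fun i j : Fin K =>
        ((2 * (j : ℕ) + (i : ℕ)).choose (K - 1) : ℤ)).det =
      (-2) ^ (K * (K - 1) / 2) :=
  symplectic_binom_det_general K
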